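/- arXiv:2508.14678 — 14 statements merged into one kernel-verified Lean document; each statement's English description precedes it below -/
import Mathlib

section
/- Let x_1, ..., x_n be n ≥ 3 real numbers with mean x̄ = (1/n)∑x_i. Then for any distinct indices j, k ∈ {1,...,n}, ∑_{i=1}^n x_i² ≥ n·x̄² + (1/2)(x_j − x_k)² + (2n/(n−2))·(x̄ − (x_j + x_k)/2)². -/
/-!
Split off the two distinguished coordinates. Cauchy–Schwarz on the remaining `n - 2` coordinates
bounds their sum of squares below by `T² / (n - 2)`, where `T` is their sum, and
`x_j² + x_k² + T² / (n - 2)` is exactly the right-hand side, once `∑ x_i = x_j + x_k + T`.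
-/

open Finset

lemma sq_sum_div_card_le_sum_sq {ι : Type*} (s : Finset ι) (f : ι → ℝ) :
    (∑ i ∈ s, f i) ^ 2 / #s ≤ ∑ i ∈ s, f i ^ 2 :=
  div_le_of_le_mul₀ (Nat.cast_nonneg _) (sum_nonneg fun i _ => sq_nonneg (f i))
    (by rw [mul_comm]; exact sq_sum_le_card_mul_sum_sq)

lemma sq_add_sq_add_sq_div_sub_two_eq (a b t N : ℝ) (hN : N ≠ 0) (hN2 : N - 2 ≠ 0) :
    a ^ 2 + b ^ 2 + t ^ 2 / (N - 2) =
      N * ((a + b + t) / N) ^ 2 + (1 / 2) * (a - b) ^ 2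
        + (2 * N / (N - 2)) * ((a + b + t) / N - (a + b) / 2) ^ 2 := by
  field_simp
  ring

theorem stmt0 (n : ℕ) (hn : 3 ≤ n) (x : Fin n → ℝ) (j k : Fin n) (hjk : j ≠ k) :
    ∑ i, (x i) ^ 2 ≥
      (n : ℝ) * ((∑ i, x i) / n) ^ 2 + (1 / 2) * (x j - x k) ^ 2
        + (2 * n / ((n : ℝ) - 2)) * ((∑ i, x i) / n - (x j + x k) / 2) ^ 2 := by
  have hn3 : (3 : ℝ) ≤ n := by exact_mod_cast hn
  set rest := ({j, k} : Finset (Fin n))ᶜ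
  have hcard : (#rest : ℝ) = n - 2 := by
    have := card_compl_add_card ({j, k} : Finset (Fin n))
    rw [card_pair hjk, Fintype.card_fin] at this
    rw [eq_sub_iff_add_eq]
    exact_mod_cast this
  have hsplit (f : Fin n → ℝ) : ∑ i, f i = f j + f k + ∑ i ∈ rest, f i := by
    rw [← sum_compl_add_sum {j, k}, sum_pair hjk, add_comm]
  have hcs := sq_sum_div_card_le_sum_sq rest x
  rw [hcard] at hcs
  rw [hsplit (fun i => x i ^ 2), hsplit x,
    ← sq_add_sq_add_sq_div_sub_two_eq _ _ _ _ (by linarith) (by linarith)]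
  linarith
end

section
/- Let x_1, ..., x_n be n ≥ 3 real numbers with mean x̄, and let j ≠ k be indices. Equality ∑ x_i² = n·x̄² + (1/2)(x_j − x_k)² + (2n/(n−2))·(x̄ − (x_j+x_k)/2)² holds if and only if all x_i with i ∉ {j,k} are equal to each other. -/
/-! Splitting off `x j` and `x k`, the left side minus the right side is exactly
`∑_{i ∉ {j, k}} (x i - m)²`, where `m` is the mean of the remaining `n - 2` values; this sum of
squares vanishes iff all those values equal `m`. -/

open Finset

theorem Finset.sum_sub_mean_sq {K ι : Type*} [Field K] [CharZero K] (s : Finset ι) (f : ι → K) :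
    ∑ i ∈ s, (f i - (∑ j ∈ s, f j) / #s) ^ 2 = ∑ i ∈ s, f i ^ 2 - (∑ i ∈ s, f i) ^ 2 / #s := by
  obtain rfl | hs := s.eq_empty_or_nonempty
  · simp
  have hcard : (#s : K) ≠ 0 := by exact_mod_cast hs.card_pos.ne'
  simp only [sub_sq, sum_add_distrib, sum_sub_distrib, ← sum_mul, ← mul_sum, sum_const,
    nsmul_eq_mul]
  field_simp
  ring

theorem Finset.sum_sub_mean_sq_eq_zero_iff {K ι : Type*} [Field K] [LinearOrder K]
    [IsStrictOrderedRing K] {s : Finset ι} {f : ι → K} :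
    ∑ i ∈ s, (f i - (∑ j ∈ s, f j) / #s) ^ 2 = 0 ↔ ∀ i ∈ s, ∀ i' ∈ s, f i = f i' := by
  rw [sum_eq_zero_iff_of_nonneg fun i _ ↦ sq_nonneg _]
  simp only [sq_eq_zero_iff, sub_eq_zero]
  constructor
  · intro h i hi i' hi'
    rw [h i hi, h i' hi']
  · intro h i hi
    rw [sum_congr rfl fun i' hi' ↦ (h i hi i' hi').symm, sum_const, nsmul_eq_mul,
      mul_div_cancel_left₀ _ (by exact_mod_cast (card_pos.2 ⟨i, hi⟩).ne')]

theorem sum_sq_eq_mean_sq_add_pair_add_sum_compl_sub_mean_sq {ι : Type*} [Fintype ι]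
    [DecidableEq ι] (x : ι → ℝ) {j k : ι} (hjk : j ≠ k) (hι : 3 ≤ Fintype.card ι) :
    ∑ i, x i ^ 2 =
      (Fintype.card ι : ℝ) * ((∑ i, x i) / Fintype.card ι) ^ 2 + (1 / 2) * (x j - x k) ^ 2
        + (2 * Fintype.card ι / ((Fintype.card ι : ℝ) - 2))
          * ((∑ i, x i) / Fintype.card ι - (x j + x k) / 2) ^ 2
        + ∑ i ∈ {j, k}ᶜ, (x i - (∑ i' ∈ {j, k}ᶜ, x i') / #{j, k}ᶜ) ^ 2 := by
  have hcard : (#({j, k}ᶜ : Finset ι) : ℝ) = Fintype.card ι - 2 := by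
    rw [card_compl, card_pair hjk, Nat.cast_sub (by omega)]
    push_cast
    ring
  have hn : (Fintype.card ι : ℝ) - 2 ≠ 0 := by
    have : (3 : ℝ) ≤ Fintype.card ι := by exact_mod_cast hι
    linarith
  have hsplit (f : ι → ℝ) : ∑ i, f i = f j + f k + ∑ i ∈ {j, k}ᶜ, f i := by
    rw [← sum_add_sum_compl {j, k}, sum_pair hjk]
  rw [sum_sub_mean_sq, hcard, hsplit x, hsplit (x · ^ 2)]
  have : (Fintype.card ι : ℝ) ≠ 0 := by positivity
  field_simp
  ring

theorem stmt1 (n : ℕ) (hn : 3 ≤ n) (x : Fin n → ℝ) (j k : Fin n) (hjk : j ≠ k) :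
    (∑ i, (x i) ^ 2 =
      (n : ℝ) * ((∑ i, x i) / n) ^ 2 + (1 / 2) * (x j - x k) ^ 2
        + (2 * n / ((n : ℝ) - 2)) * ((∑ i, x i) / n - (x j + x k) / 2) ^ 2)
    ↔ (∀ i i' : Fin n, i ≠ j → i ≠ k → i' ≠ j → i' ≠ k → x i = x i') := by
  have h := sum_sq_eq_mean_sq_add_pair_add_sum_compl_sub_mean_sq x hjk (by simpa using hn)
  rw [Fintype.card_fin] at h
  rw [h, add_eq_left, sum_sub_mean_sq_eq_zero_iff]
  simp only [mem_compl, mem_insert, mem_singleton, not_or, and_imp]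
  exact ⟨fun h i i' hij hik hij' hik' ↦ h i hij hik i' hij' hik',
    fun h i hij hik i' hij' hik' ↦ h i i' hij hik hij' hik'⟩
end

section
/- Let G be a simple graph on n ≥ 3 vertices with all vertex degrees positive, and let α be a real number. Then for any distinct vertices v_j, v_k, Z_{2α}(G) ≥ (Z_α(G))²/n + (1/2)(d_j^α − d_k^α)² + (2n/(n−2))·(Z_α(G)/n − (d_j^α + d_k^α)/2)², where d_i denotes the degree of v_i. -/
/-! Write `a i = dᵢ^α`, so that `Z_{2α} = ∑ aᵢ²`. With `T` the sum of the `aᵢ` over the `n - 2`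
vertices other than `j, k`, the right-hand side is exactly `a_j² + a_k² + T² / (n - 2)`,
and `T² / (n - 2)` is at most the corresponding sum of squares by Cauchy–Schwarz. -/

open Finset

lemma sq_div_add_half_sq_add_mul_sq_eq {x y T N : ℝ} (hN : N ≠ 0) (hN2 : N - 2 ≠ 0) :
    (T + (x + y)) ^ 2 / N + (1 / 2) * (x - y) ^ 2
      + (2 * N / (N - 2)) * ((T + (x + y)) / N - (x + y) / 2) ^ 2
      = x ^ 2 + y ^ 2 + T ^ 2 / (N - 2) := by
  field_simp
  ring

lemma sq_sum_div_card_add_le_sum_sq {ι : Type*} [Fintype ι] (a : ι → ℝ)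
    (hn : 3 ≤ Fintype.card ι) {j k : ι} (hjk : j ≠ k) :
    (∑ i, a i) ^ 2 / Fintype.card ι + (1 / 2) * (a j - a k) ^ 2
      + (2 * (Fintype.card ι : ℝ) / ((Fintype.card ι : ℝ) - 2)) *
          ((∑ i, a i) / Fintype.card ι - (a j + a k) / 2) ^ 2
      ≤ ∑ i, a i ^ 2 := by
  classical
  have hN3 : (3 : ℝ) ≤ Fintype.card ι := by exact_mod_cast hn
  set N : ℝ := (Fintype.card ι : ℝ)
  set rest : Finset ι := {j, k}ᶜ
  have hrest : (#rest : ℝ) = N - 2 := by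
    have := card_add_card_compl ({j, k} : Finset ι)
    rw [card_pair hjk] at this
    simp only [N, ← this]
    push_cast
    ring
  have hsum (f : ι → ℝ) : ∑ i, f i = ∑ i ∈ rest, f i + (f j + f k) := by
    rw [← sum_pair hjk, sum_compl_add_sum]
  have cauchy_schwarz : (∑ i ∈ rest, a i) ^ 2 / (N - 2) ≤ ∑ i ∈ rest, a i ^ 2 := by
    rw [div_le_iff₀ (by linarith), mul_comm, ← hrest]
    exact sq_sum_le_card_mul_sum_sq
  rw [hsum a, hsum (a · ^ 2),
    sq_div_add_half_sq_add_mul_sq_eq (by linarith) (by linarith)]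
  linarith

theorem stmt2_general {V : Type*} [Fintype V] (G : SimpleGraph V)
    [DecidableRel G.Adj] (hn : 3 ≤ Fintype.card V)
    (α : ℝ) (j k : V) (hjk : j ≠ k) :
    ∑ v : V, (G.degree v : ℝ) ^ (2 * α) ≥
      (∑ v : V, (G.degree v : ℝ) ^ α) ^ 2 / (Fintype.card V : ℝ)
      + (1 / 2) * ((G.degree j : ℝ) ^ α - (G.degree k : ℝ) ^ α) ^ 2
      + (2 * (Fintype.card V : ℝ) / ((Fintype.card V : ℝ) - 2)) *
          ((∑ v : V, (G.degree v : ℝ) ^ α) / (Fintype.card V : ℝ)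
            - ((G.degree j : ℝ) ^ α + (G.degree k : ℝ) ^ α) / 2) ^ 2 := by
  have hsq (v : V) : (G.degree v : ℝ) ^ (2 * α) = ((G.degree v : ℝ) ^ α) ^ 2 := by
    rw [mul_comm, ← Real.rpow_mul_natCast (Nat.cast_nonneg _)]
    norm_num
  simp only [hsq]
  exact sq_sum_div_card_add_le_sum_sq (fun v => (G.degree v : ℝ) ^ α) hn hjk

theorem stmt2 {V : Type*} [Fintype V] [DecidableEq V] (G : SimpleGraph V)
    [DecidableRel G.Adj] (hn : 3 ≤ Fintype.card V)
    (hdeg : ∀ v : V, 0 < G.degree v) (α : ℝ) (j k : V) (hjk : j ≠ k) :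
    ∑ v : V, (G.degree v : ℝ) ^ (2 * α) ≥
      (∑ v : V, (G.degree v : ℝ) ^ α) ^ 2 / (Fintype.card V : ℝ)
      + (1 / 2) * ((G.degree j : ℝ) ^ α - (G.degree k : ℝ) ^ α) ^ 2
      + (2 * (Fintype.card V : ℝ) / ((Fintype.card V : ℝ) - 2)) *
          ((∑ v : V, (G.degree v : ℝ) ^ α) / (Fintype.card V : ℝ)
            - ((G.degree j : ℝ) ^ α + (G.degree k : ℝ) ^ α) / 2) ^ 2 :=
  stmt2_general G hn α j k hjk
end

section
/- Let G be a simple graph on n ≥ 3 vertices with all degrees positive, maximum degree Δ and minimum degree δ, and let α be real. Then n·Z_{2α}(G) − (Z_α(G))² ≥ (n/2)(Δ^α − δ^α)² + (2n²/(n−2))·(Z_α(G)/n − (Δ^α + δ^α)/2)²; in particular this refines the known bound n·Z_{2α}(G) − (Z_α(G))² ≥ (n/2)(Δ^α − δ^α)². -/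
open Finset

theorem stmt3 {V : Type*} [Fintype V] [DecidableEq V] (G : SimpleGraph V)
    [DecidableRel G.Adj] (hn : 3 ≤ Fintype.card V)
    (hdeg : ∀ v : V, 0 < G.degree v) (α : ℝ) (Δ δ : ℕ)
    (hΔ₁ : ∀ v : V, G.degree v ≤ Δ) (hΔ₂ : ∃ v : V, G.degree v = Δ)
    (hδ₁ : ∀ v : V, δ ≤ G.degree v) (hδ₂ : ∃ v : V, G.degree v = δ) :
    (Fintype.card V : ℝ) * ∑ v : V, (G.degree v : ℝ) ^ (2 * α)
      - (∑ v : V, (G.degree v : ℝ) ^ α) ^ 2 ≥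
      ((Fintype.card V : ℝ) / 2) * ((Δ : ℝ) ^ α - (δ : ℝ) ^ α) ^ 2
      + (2 * (Fintype.card V : ℝ) ^ 2 / ((Fintype.card V : ℝ) - 2)) *
          ((∑ v : V, (G.degree v : ℝ) ^ α) / (Fintype.card V : ℝ)
            - ((Δ : ℝ) ^ α + (δ : ℝ) ^ α) / 2) ^ 2 := by
  classical
  have hn3 : (3 : ℝ) ≤ (Fintype.card V : ℝ) := by exact_mod_cast hn
  set n : ℝ := (Fintype.card V : ℝ) with hndef
  have hnpos : (0 : ℝ) < n := by linarith
  have hn2 : (0 : ℝ) < n - 2 := by linarith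
  set a : V → ℝ := fun v => (G.degree v : ℝ) ^ α with hadef
  have hsq : ∀ v : V, (G.degree v : ℝ) ^ (2 * α) = (a v) ^ 2 := by
    intro v
    have hd : (0 : ℝ) < (G.degree v : ℝ) := by exact_mod_cast hdeg v
    rw [hadef]
    rw [← Real.rpow_natCast ((G.degree v : ℝ) ^ α) 2, ← Real.rpow_mul hd.le]
    norm_num [mul_comm]
  simp only [hsq]
  set S : ℝ := ∑ v : V, a v with hSdef
  set c : ℝ := ((Δ : ℝ) ^ α + (δ : ℝ) ^ α) / 2 with hcdef
  set r : ℝ := ((Δ : ℝ) ^ α - (δ : ℝ) ^ α) / 2 with hrdef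
  set b : V → ℝ := fun v => a v - c with hbdef
  set T : ℝ := S - n * c with hTdef
  have hsum_b : ∑ v : V, b v = T := by
    simp [hbdef, Finset.sum_sub_distrib, ← hSdef, hTdef, mul_comm]
    exact Or.inl hndef.symm
  have hsum_b2 : ∑ v : V, (b v) ^ 2 = (∑ v : V, (a v) ^ 2) - 2 * c * S + n * c ^ 2 := by
    have hpt : ∀ v : V, (b v) ^ 2 = (a v) ^ 2 - 2 * c * a v + c ^ 2 := by
      intro v; rw [hbdef]; ring
    rw [Finset.sum_congr rfl fun v _ => hpt v, Finset.sum_add_distrib,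
        Finset.sum_sub_distrib, ← Finset.mul_sum, Finset.sum_const, Finset.card_univ,
        nsmul_eq_mul, ← hSdef, ← hndef]
  by_cases hΔδ : Δ = δ
  · -- all degrees equal; both sides are zero
    have hdd : ∀ v : V, G.degree v = δ := fun v => le_antisymm (hΔδ ▸ hΔ₁ v) (hδ₁ v)
    have hall : ∀ v : V, a v = (δ : ℝ) ^ α := by
      intro v
      show ((G.degree v : ℝ)) ^ α = _
      rw [hdd v]
    have hS : S = n * (δ : ℝ) ^ α := by
      rw [hSdef, Finset.sum_congr rfl fun v _ => hall v, Finset.sum_const,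
          Finset.card_univ, nsmul_eq_mul, ← hndef]
    have hS2 : ∑ v : V, (a v) ^ 2 = n * ((δ : ℝ) ^ α) ^ 2 := by
      rw [Finset.sum_congr rfl fun v _ => (by rw [hall v] : (a v) ^ 2 = ((δ : ℝ) ^ α) ^ 2),
          Finset.sum_const, Finset.card_univ, nsmul_eq_mul, ← hndef]
    have hΔδ' : (Δ : ℝ) ^ α = (δ : ℝ) ^ α := by rw [hΔδ]
    rw [hΔδ', hS2, hS]
    have e0 : n * (δ : ℝ) ^ α / n - c = 0 := by
      rw [hcdef, hΔδ']
      field_simp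
      ring
    rw [e0]
    have e1 : n * (n * ((δ : ℝ) ^ α) ^ 2) - (n * (δ : ℝ) ^ α) ^ 2 = 0 := by ring
    rw [e1]
    have e2 : n / 2 * ((δ : ℝ) ^ α - (δ : ℝ) ^ α) ^ 2 + 2 * n ^ 2 / (n - 2) * (0:ℝ) ^ 2 = 0 := by
      ring
    rw [e2]
  · -- extremal vertices are distinct
    obtain ⟨u, hu⟩ := hΔ₂
    obtain ⟨w, hw⟩ := hδ₂
    have huw : u ≠ w := by
      intro h
      exact hΔδ (by rw [← hu, h, hw])
    have hbu : b u = r := by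
      simp only [hbdef, hadef, hu, hrdef, hcdef]
      ring
    have hbw : b w = -r := by
      simp only [hbdef, hadef, hw, hrdef, hcdef]
      ring
    have hwmem : w ∈ (Finset.univ : Finset V).erase u :=
      Finset.mem_erase.2 ⟨Ne.symm huw, Finset.mem_univ w⟩
    set s : Finset V := ((Finset.univ : Finset V).erase u).erase w with hsdef
    have hdecomp : ∀ f : V → ℝ, ∑ v : V, f v = f u + f w + ∑ v ∈ s, f v := by
      intro f
      rw [← Finset.add_sum_erase _ f (Finset.mem_univ u),
          ← Finset.add_sum_erase _ f hwmem, add_assoc]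
    have hcard : (s.card : ℝ) = n - 2 := by
      rw [hsdef, Finset.card_erase_of_mem hwmem, Finset.card_erase_of_mem (Finset.mem_univ u)]
      rw [Finset.card_univ]
      have : 2 ≤ Fintype.card V := by omega
      push_cast [Nat.sub_sub]
      rw [Nat.cast_sub this]
      push_cast
      rfl
    set Q : ℝ := ∑ v ∈ s, (b v) ^ 2 with hQdef
    have hT' : ∑ v ∈ s, b v = T := by
      have := hdecomp b
      rw [hsum_b, hbu, hbw] at this
      linarith
    have hCS : T ^ 2 ≤ (n - 2) * Q := by
      have h := sq_sum_le_card_mul_sum_sq (s := s) (f := b)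
      rw [hT'] at h
      rw [← hcard]
      exact_mod_cast h
    have hb2 : ∑ v : V, (b v) ^ 2 = 2 * r ^ 2 + Q := by
      rw [hdecomp (fun v => (b v) ^ 2)]
      simp only [hbu, hbw, ← hQdef]
      ring
    -- shift identity
    have hshift : n * (∑ v : V, (a v) ^ 2) - S ^ 2 = n * (2 * r ^ 2 + Q) - T ^ 2 := by
      rw [← hb2, hsum_b2, hTdef]
      ring
    have hRHS2 : (2 * n ^ 2 / (n - 2)) * (S / n - c) ^ 2 = 2 * T ^ 2 / (n - 2) := by
      have h1 : S / n - c = T / n := by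
        rw [hTdef]; field_simp
      rw [h1]
      field_simp
    rw [hRHS2]
    have hkey : 2 * T ^ 2 / (n - 2) ≤ n * Q - T ^ 2 := by
      rw [div_le_iff₀ hn2]
      nlinarith [hCS, sq_nonneg T]
    have hRHS1 : (n / 2) * ((Δ : ℝ) ^ α - (δ : ℝ) ^ α) ^ 2 = 2 * n * r ^ 2 := by
      rw [hrdef]; ring
    rw [hRHS1]
    have hshift' : n * (∑ v : V, (a v) ^ 2) - S ^ 2 = 2 * n * r ^ 2 + n * Q - T ^ 2 := by
      rw [hshift]; ring
    clear_value Q T b s r c S a n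
    linarith [hshift', hkey]
end

section
/- Let G be a simple graph with n ≥ 3 vertices and m edges, all degrees positive. Then for any two distinct vertices with degrees d_j and d_k, M_1(G) ≥ 4m²/n + (1/2)(d_j − d_k)² + (2n/(n−2))·(2m/n − (d_j + d_k)/2)², where M_1(G) = ∑_i d_i². -/
/-!
Writing `a = d_j`, `b = d_k`, the right-hand side equals
`a² + b² + (2m - a - b)² / (n - 2)`. Since the remaining `n - 2` degrees sum to `2m - a - b`,
Cauchy–Schwarz bounds `(2m - a - b)² / (n - 2)` by the sum of their squares, `M_1(G) - a² - b²`.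
-/

open Finset

theorem sq_sum_sub_pair_le_card_sub_two_mul {ι : Type*} [Fintype ι] [DecidableEq ι]
    (f : ι → ℝ) {j k : ι} (hjk : j ≠ k) :
    (∑ i, f i - (f j + f k)) ^ 2 ≤
      ((Fintype.card ι : ℝ) - 2) * (∑ i, f i ^ 2 - (f j ^ 2 + f k ^ 2)) := by
  have hpair : ({j, k} : Finset ι) ⊆ univ := subset_univ _
  have hsum (g : ι → ℝ) : ∑ i ∈ univ \ {j, k}, g i = ∑ i, g i - (g j + g k) := by
    rw [sum_sdiff_eq_sub hpair, sum_pair hjk]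
  have hcard : ((univ \ {j, k} : Finset ι).card : ℝ) = (Fintype.card ι : ℝ) - 2 := by
    rw [card_sdiff_of_subset hpair, card_pair hjk, card_univ,
      Nat.cast_sub (by simpa [card_pair hjk] using card_le_univ ({j, k} : Finset ι))]
    norm_num
  rw [← hsum, ← hsum (f · ^ 2), ← hcard]
  exact sq_sum_le_card_mul_sum_sq

theorem stmt4_general {V : Type*} [Fintype V] [DecidableEq V] (G : SimpleGraph V)
    [DecidableRel G.Adj] (hn : 3 ≤ Fintype.card V)
    (m : ℕ) (hm : m = G.edgeFinset.card)
    (j k : V) (hjk : j ≠ k) :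
    ∑ v : V, (G.degree v : ℝ) ^ 2 ≥
      4 * (m : ℝ) ^ 2 / (Fintype.card V : ℝ)
      + (1 / 2) * ((G.degree j : ℝ) - (G.degree k : ℝ)) ^ 2
      + (2 * (Fintype.card V : ℝ) / ((Fintype.card V : ℝ) - 2)) *
          (2 * (m : ℝ) / (Fintype.card V : ℝ)
            - ((G.degree j : ℝ) + (G.degree k : ℝ)) / 2) ^ 2 := by
  have hn3 : (3 : ℝ) ≤ Fintype.card V := by exact_mod_cast hn
  have hsum : ∑ v, (G.degree v : ℝ) = 2 * m := by
    exact_mod_cast hm ▸ G.sum_degrees_eq_twice_card_edges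
  have hCS := sq_sum_sub_pair_le_card_sub_two_mul (fun v ↦ (G.degree v : ℝ)) hjk
  rw [hsum] at hCS
  set n : ℝ := (Fintype.card V : ℝ)
  set a : ℝ := (G.degree j : ℝ)
  set b : ℝ := (G.degree k : ℝ)
  have hn2 : 0 < n - 2 := by linarith
  have hrhs : 4 * (m : ℝ) ^ 2 / n + (1 / 2) * (a - b) ^ 2
      + (2 * n / (n - 2)) * (2 * (m : ℝ) / n - (a + b) / 2) ^ 2
      = a ^ 2 + b ^ 2 + (2 * (m : ℝ) - (a + b)) ^ 2 / (n - 2) := by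
    have : n ≠ 0 := by linarith
    field_simp
    ring
  have hrest : (2 * (m : ℝ) - (a + b)) ^ 2 / (n - 2) ≤
      ∑ v, (G.degree v : ℝ) ^ 2 - (a ^ 2 + b ^ 2) := by
    rw [div_le_iff₀ hn2]
    linarith
  rw [ge_iff_le, hrhs]
  linarith

theorem stmt4 {V : Type*} [Fintype V] [DecidableEq V] (G : SimpleGraph V)
    [DecidableRel G.Adj] (hn : 3 ≤ Fintype.card V)
    (hdeg : ∀ v : V, 0 < G.degree v) (m : ℕ) (hm : m = G.edgeFinset.card)
    (j k : V) (hjk : j ≠ k) :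
    ∑ v : V, (G.degree v : ℝ) ^ 2 ≥
      4 * (m : ℝ) ^ 2 / (Fintype.card V : ℝ)
      + (1 / 2) * ((G.degree j : ℝ) - (G.degree k : ℝ)) ^ 2
      + (2 * (Fintype.card V : ℝ) / ((Fintype.card V : ℝ) - 2)) *
          (2 * (m : ℝ) / (Fintype.card V : ℝ)
            - ((G.degree j : ℝ) + (G.degree k : ℝ)) / 2) ^ 2 :=
  stmt4_general G hn m hm j k hjk
end

section
/- Let G be a simple graph with n ≥ 3 vertices, m edges, maximum degree Δ and minimum degree δ. Then M_1(G) ≥ 4m²/n + (1/2)(Δ − δ)² + (2n/(n−2))·(2m/n − (Δ + δ)/2)². -/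
open Finset

theorem stmt5 {V : Type*} [Fintype V] [DecidableEq V] (G : SimpleGraph V)
    [DecidableRel G.Adj] (hn : 3 ≤ Fintype.card V)
    (m : ℕ) (hm : m = G.edgeFinset.card) (Δ δ : ℕ)
    (hΔ₁ : ∀ v : V, G.degree v ≤ Δ) (hΔ₂ : ∃ v : V, G.degree v = Δ)
    (hδ₁ : ∀ v : V, δ ≤ G.degree v) (hδ₂ : ∃ v : V, G.degree v = δ) :
    ∑ v : V, (G.degree v : ℝ) ^ 2 ≥
      4 * (m : ℝ) ^ 2 / (Fintype.card V : ℝ)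
      + (1 / 2) * ((Δ : ℝ) - (δ : ℝ)) ^ 2
      + (2 * (Fintype.card V : ℝ) / ((Fintype.card V : ℝ) - 2)) *
          (2 * (m : ℝ) / (Fintype.card V : ℝ) - ((Δ : ℝ) + (δ : ℝ)) / 2) ^ 2 := by
  classical
  set n : ℕ := Fintype.card V with hncard
  have hn2 : (2 : ℝ) < (n : ℝ) := by exact_mod_cast lt_of_lt_of_le (by norm_num) hn
  have hn0 : (0 : ℝ) < (n : ℝ) := by linarith
  have hsum : ∑ v : V, (G.degree v : ℝ) = 2 * (m : ℝ) := by
    rw [hm]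
    exact_mod_cast congrArg (Nat.cast : ℕ → ℝ) (G.sum_degrees_eq_twice_card_edges)
  obtain ⟨u, hu⟩ := hΔ₂
  obtain ⟨w, hw⟩ := hδ₂
  by_cases hΔδ : Δ = δ
  · -- regular graph
    have hall : ∀ v : V, G.degree v = Δ := fun v =>
      le_antisymm (hΔ₁ v) (hΔδ ▸ hδ₁ v)
    have h2m : 2 * (m : ℝ) = (n : ℝ) * (Δ : ℝ) := by
      rw [← hsum]
      simp [hall, hncard, mul_comm]
    have hsq : ∑ v : V, (G.degree v : ℝ) ^ 2 = (n : ℝ) * (Δ : ℝ) ^ 2 := by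
      simp [hall, hncard, mul_comm]
    subst hΔδ
    rw [hsq]
    have h1 : 2 * (m : ℝ) / (n : ℝ) - ((Δ : ℝ) + (Δ : ℝ)) / 2 = 0 := by
      rw [h2m]; field_simp; ring
    rw [h1]
    have : 4 * (m : ℝ) ^ 2 / (n : ℝ) = (n : ℝ) * (Δ : ℝ) ^ 2 := by
      have : 4 * (m : ℝ) ^ 2 = ((n : ℝ) * (Δ : ℝ)) ^ 2 := by nlinarith [h2m]
      rw [this]; field_simp
    rw [this]; ring_nf; simp
  · have huw : u ≠ w := by
      intro h; apply hΔδ; rw [← hu, h, hw]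
    -- split sum
    set S : Finset V := Finset.univ \ {u, w} with hS
    have hcardS : (S.card : ℝ) = (n : ℝ) - 2 := by
      have : S.card = n - 2 := by
        rw [hS, Finset.card_sdiff_of_subset (by simp)]
        simp [Finset.card_insert_of_notMem, huw, hncard]
      rw [this]
      have : (2 : ℕ) ≤ n := by omega
      push_cast [Nat.cast_sub this]
      ring
    have hsplit : ∀ f : V → ℝ, ∑ v : V, f v = f u + f w + ∑ v ∈ S, f v := by
      intro f
      have : Finset.univ = insert u (insert w S) := by
        rw [hS]
        ext x
        simp [Finset.mem_insert, Finset.mem_sdiff]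
        tauto
      rw [this, Finset.sum_insert, Finset.sum_insert]
      · ring
      · simp [hS]
      · simp [hS, huw]
    have hsumS : ∑ v ∈ S, (G.degree v : ℝ) = 2 * (m : ℝ) - (Δ : ℝ) - (δ : ℝ) := by
      have := hsplit (fun v => (G.degree v : ℝ))
      rw [hsum] at this
      rw [hu, hw] at this
      linarith
    have hCS : ((n : ℝ) - 2) * ∑ v ∈ S, (G.degree v : ℝ) ^ 2 ≥
        (2 * (m : ℝ) - (Δ : ℝ) - (δ : ℝ)) ^ 2 := by
      have := sq_sum_le_card_mul_sum_sq (s := S) (f := fun v => (G.degree v : ℝ))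
      rw [hsumS] at this
      calc ((n : ℝ) - 2) * ∑ v ∈ S, (G.degree v : ℝ) ^ 2
          = (S.card : ℝ) * ∑ v ∈ S, (G.degree v : ℝ) ^ 2 := by rw [hcardS]
        _ ≥ _ := this
    have hsplitsq := hsplit (fun v => (G.degree v : ℝ) ^ 2)
    rw [hu, hw] at hsplitsq
    rw [hsplitsq]
    set A : ℝ := ∑ v ∈ S, (G.degree v : ℝ) ^ 2 with hA
    rw [ge_iff_le]
    have key : 4 * (m:ℝ)^2 / (n:ℝ) + (1/2) * ((Δ:ℝ) - δ)^2
        + (2 * n / ((n:ℝ) - 2)) * (2 * m / n - ((Δ:ℝ) + δ)/2)^2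
        ≤ (Δ:ℝ)^2 + (δ:ℝ)^2 + A := by
      have hAge : A ≥ (2 * (m : ℝ) - Δ - δ) ^ 2 / ((n:ℝ) - 2) := by
        rw [ge_iff_le, div_le_iff₀ (by linarith)]
        linarith [hCS]
      have heq : 4 * (m:ℝ)^2 / (n:ℝ) + (1/2) * ((Δ:ℝ) - δ)^2
          + (2 * n / ((n:ℝ) - 2)) * (2 * m / n - ((Δ:ℝ) + δ)/2)^2
          = (Δ:ℝ)^2 + (δ:ℝ)^2 + (2 * (m : ℝ) - Δ - δ) ^ 2 / ((n:ℝ) - 2) := by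
        have hne : (n:ℝ) ≠ 0 := ne_of_gt hn0
        have hne2 : (n:ℝ) - 2 ≠ 0 := by linarith
        field_simp
        ring
      rw [heq]
      linarith
    exact key
end

section
/- Let G be a simple graph with degree sequence Δ = d_1 ≥ d_2 ≥ ... ≥ d_n = δ, n ≥ 3, m edges. If d_2 = d_3 = ... = d_{n−1} (i.e., all degrees except possibly the largest and smallest are equal), then M_1(G) = 4m²/n + (1/2)(Δ − δ)² + (2n/(n−2))·(2m/n − (Δ + δ)/2)². -/
/-!
All degrees but `Δ = d₁` and `δ = dₙ` equal a common value `c`, so `2m = Δ + δ + (n - 2) c` and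
`M₁(G) = Δ² + δ² + (n - 2) c²`. Eliminating `c` between these two expressions gives the formula.
-/

theorem Fin.sum_eq_first_add_last_add_nsmul {M : Type*} [AddCommMonoid M] {n : ℕ} (hn : 2 ≤ n)
    (g : Fin n → M) (c : M) (h : ∀ i : Fin n, 1 ≤ i.1 → i.1 ≤ n - 2 → g i = c) :
    ∑ i, g i = g ⟨0, by omega⟩ + g ⟨n - 1, by omega⟩ + (n - 2) • c := by
  obtain ⟨k, rfl⟩ : ∃ k, n = k + 2 := ⟨n - 2, by omega⟩
  have hmid : ∑ i : Fin k, g i.castSucc.succ = k • c := by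
    rw [Finset.sum_congr rfl fun i _ => h _ (by simp) (by simp)]
    simp
  rw [Fin.sum_univ_succ, Fin.sum_univ_castSucc, hmid]
  simp only [Nat.add_sub_cancel]
  rw [add_comm (k • c), ← add_assoc]
  rfl

theorem sq_add_sq_add_mul_sq_eq {n Δ δ c m : ℝ} (hn : n ≠ 0) (hn2 : n - 2 ≠ 0)
    (hm : 2 * m = Δ + δ + (n - 2) * c) :
    Δ ^ 2 + δ ^ 2 + (n - 2) * c ^ 2 =
      4 * m ^ 2 / n + (1 / 2) * (Δ - δ) ^ 2 + (2 * n / (n - 2)) * (2 * m / n - (Δ + δ) / 2) ^ 2 := by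
  obtain rfl : c = (2 * m - Δ - δ) / (n - 2) := by field_simp; linarith
  field_simp
  ring

theorem stmt6 (n : ℕ) (hn : 3 ≤ n) {V : Type*} [Fintype V]
    (G : SimpleGraph V) [DecidableRel G.Adj]
    (m : ℕ) (hm : m = G.edgeFinset.card)
    (e : Fin n ≃ V) (d : Fin n → ℕ) (hd : ∀ i, d i = G.degree (e i))
    (hmid : ∀ i : Fin n, 1 ≤ i.1 → i.1 ≤ n - 2 → d i = d ⟨1, by omega⟩) :
    ∑ v : V, (G.degree v : ℝ) ^ 2 =
      4 * (m : ℝ) ^ 2 / (n : ℝ)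
      + (1 / 2) * ((d ⟨0, by omega⟩ : ℝ) - (d ⟨n - 1, by omega⟩ : ℝ)) ^ 2
      + (2 * (n : ℝ) / ((n : ℝ) - 2)) *
          (2 * (m : ℝ) / (n : ℝ)
            - ((d ⟨0, by omega⟩ : ℝ) + (d ⟨n - 1, by omega⟩ : ℝ)) / 2) ^ 2 := by
  have hn2 : (n : ℝ) - 2 ≠ 0 := by
    have : (3 : ℝ) ≤ n := by exact_mod_cast hn
    linarith
  have hsum (f : ℕ → ℝ) : ∑ v : V, f (G.degree v) =
      f (d ⟨0, by omega⟩) + f (d ⟨n - 1, by omega⟩) + ((n : ℝ) - 2) * f (d ⟨1, by omega⟩) := by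
    rw [← e.sum_comp, Fin.sum_eq_first_add_last_add_nsmul (by omega) _ (f (d ⟨1, by omega⟩))
      fun i h1 h2 => by rw [← hd, hmid i h1 h2], nsmul_eq_mul, Nat.cast_sub (by omega)]
    simp [hd]
  have hdeg : 2 * (m : ℝ) =
      d ⟨0, by omega⟩ + d ⟨n - 1, by omega⟩ + ((n : ℝ) - 2) * d ⟨1, by omega⟩ := by
    rw [← hsum Nat.cast, hm]
    exact_mod_cast G.sum_degrees_eq_twice_card_edges.symm
  rw [hsum (fun k => (k : ℝ) ^ 2)]
  exact sq_add_sq_add_mul_sq_eq (by positivity) hn2 hdeg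
end

section
/- Let G be a simple graph with n ≥ 4 vertices and m edges, ordered degree sequence Δ = d_1 ≥ d_2 ≥ ... ≥ d_n = δ. Then M_1(G) ≥ Δ² + (2m − Δ)²/(n−1) + (1/2)(d_2 − δ)² + (2(n−1)/(n−3))·((2m − Δ)/(n−1) − (d_2 + δ)/2)². -/
/-!
Split off the three degrees `Δ = d₁`, `d₂`, `δ = dₙ`. Writing `t` for the sum of the remaining
`n - 3` degrees, the right-hand side is exactly `Δ² + d₂² + δ² + t² / (n - 3)`, and
`t² / (n - 3)` is at most the sum of the remaining squared degrees by Cauchy–Schwarz.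
-/

open Finset

theorem sq_add_sq_div_add_half_sq_add_mul_sq_eq (k t a b c : ℝ) (hk1 : k - 1 ≠ 0)
    (hk3 : k - 3 ≠ 0) :
    a ^ 2 + (t + b + c) ^ 2 / (k - 1) + 1 / 2 * (b - c) ^ 2
      + 2 * (k - 1) / (k - 3) * ((t + b + c) / (k - 1) - (b + c) / 2) ^ 2
      = t ^ 2 / (k - 3) + (a ^ 2 + b ^ 2 + c ^ 2) := by
  field_simp
  ring

theorem Fintype.sum_eq_sum_compl_add_three {ι M : Type*} [Fintype ι] [DecidableEq ι]
    [AddCommMonoid M] {i j l : ι} (hij : i ≠ j) (hil : i ≠ l) (hjl : j ≠ l) (g : ι → M) :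
    ∑ x, g x = ∑ x ∈ ({i, j, l} : Finset ι)ᶜ, g x + (g i + g j + g l) := by
  rw [← sum_compl_add_sum {i, j, l}, sum_insert (by simp [hij, hil]),
    sum_insert (by simp [hjl]), sum_singleton, add_assoc (g i)]

theorem sum_sq_ge_of_three_distinct {ι : Type*} [Fintype ι] [DecidableEq ι] (f : ι → ℝ)
    {i j l : ι} (hij : i ≠ j) (hil : i ≠ l) (hjl : j ≠ l) (hcard : 3 < Fintype.card ι) :
    ∑ x, f x ^ 2 ≥
      f i ^ 2 + (∑ x, f x - f i) ^ 2 / ((Fintype.card ι : ℝ) - 1)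
      + 1 / 2 * (f j - f l) ^ 2
      + 2 * ((Fintype.card ι : ℝ) - 1) / ((Fintype.card ι : ℝ) - 3) *
          ((∑ x, f x - f i) / ((Fintype.card ι : ℝ) - 1) - (f j + f l) / 2) ^ 2 := by
  have hk : (3 : ℝ) < Fintype.card ι := by exact_mod_cast hcard
  set k : ℝ := (Fintype.card ι : ℝ)
  set T : Finset ι := ({i, j, l} : Finset ι)ᶜ
  have hcardT : (#T : ℝ) = k - 3 := by
    have : #({i, j, l} : Finset ι) = 3 := card_eq_three.2 ⟨i, j, l, hij, hil, hjl, rfl⟩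
    rw [card_compl, this, Nat.cast_sub hcard.le]
    rfl
  have cauchy_schwarz : (∑ x ∈ T, f x) ^ 2 ≤ (k - 3) * ∑ x ∈ T, f x ^ 2 :=
    hcardT ▸ sq_sum_le_card_mul_sum_sq
  have hrest : ∑ x, f x - f i = ∑ x ∈ T, f x + f j + f l := by
    rw [Fintype.sum_eq_sum_compl_add_three hij hil hjl f]
    ring
  rw [hrest, sq_add_sq_div_add_half_sq_add_mul_sq_eq k _ _ _ _ (by linarith) (by linarith),
    Fintype.sum_eq_sum_compl_add_three hij hil hjl (f · ^ 2), ge_iff_le, add_le_add_iff_right,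
    div_le_iff₀ (by linarith), mul_comm]
  exact cauchy_schwarz

theorem stmt9 (n : ℕ) (hn : 4 ≤ n) {V : Type*} [Fintype V]
    (G : SimpleGraph V) [DecidableRel G.Adj]
    (m : ℕ) (hm : m = G.edgeFinset.card)
    (e : Fin n ≃ V) (d : Fin n → ℕ) (hd : ∀ i, d i = G.degree (e i)) :
    ∑ v : V, (G.degree v : ℝ) ^ 2 ≥
      (d ⟨0, by omega⟩ : ℝ) ^ 2
      + (2 * (m : ℝ) - (d ⟨0, by omega⟩ : ℝ)) ^ 2 / ((n : ℝ) - 1)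
      + (1 / 2) * ((d ⟨1, by omega⟩ : ℝ) - (d ⟨n - 1, by omega⟩ : ℝ)) ^ 2
      + (2 * ((n : ℝ) - 1) / ((n : ℝ) - 3)) *
          ((2 * (m : ℝ) - (d ⟨0, by omega⟩ : ℝ)) / ((n : ℝ) - 1)
            - ((d ⟨1, by omega⟩ : ℝ) + (d ⟨n - 1, by omega⟩ : ℝ)) / 2) ^ 2 := by
  have hsq : ∑ v, (G.degree v : ℝ) ^ 2 = ∑ i, (d i : ℝ) ^ 2 :=
    (Fintype.sum_equiv e _ _ fun i => by simp [hd]).symm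
  have hsum : ∑ i, (d i : ℝ) = 2 * m := by
    rw [Fintype.sum_equiv e _ (fun v => (G.degree v : ℝ)) fun i => by simp [hd], hm,
      ← Nat.cast_sum, G.sum_degrees_eq_twice_card_edges]
    push_cast
    rfl
  have h := sum_sq_ge_of_three_distinct (fun i => (d i : ℝ))
    (i := ⟨0, by omega⟩) (j := ⟨1, by omega⟩) (l := ⟨n - 1, by omega⟩)
    (by simp [Fin.ext_iff]) (by simp [Fin.ext_iff]; omega) (by simp [Fin.ext_iff]; omega)
    (by simp; omega)
  rw [hsq]
  simpa only [Fintype.card_fin, hsum] using h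
end

section
/- Let G be a simple graph with n ≥ 5 vertices and m edges, ordered degree sequence Δ = d_1 ≥ d_2 ≥ ... ≥ d_{n−1} ≥ d_n = δ. Then M_1(G) ≥ Δ² + δ² + (2m − Δ − δ)²/(n−2) + (1/2)(d_2 − d_{n−1})² + (2(n−2)/(n−4))·((2m − Δ − δ)/(n−2) − (d_2 + d_{n−1})/2)². -/
/-!
Keep the four degrees `Δ, d₂, d_{n-1}, δ` apart and apply Cauchy–Schwarz to the remaining `n - 4`
degrees, whose sum is `T = 2m - Δ - d₂ - d_{n-1} - δ`: this gives
`M₁(G) ≥ Δ² + d₂² + d_{n-1}² + δ² + T² / (n - 4)`. Writing `a = d₂`, `b = d_{n-1}`, the stated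
right-hand side is exactly this bound rearranged, since
`(a + b + T)² / (n - 2) + (a - b)² / 2 + 2(n - 2)/(n - 4) · ((a + b + T)/(n - 2) - (a + b)/2)²`
equals `a² + b² + T² / (n - 4)`.
-/

open Finset

lemma sum_sq_add_sq_sum_compl_div_card_le {ι : Type*} [Fintype ι] [DecidableEq ι]
    (s : Finset ι) (f : ι → ℝ) :
    ∑ i ∈ s, f i ^ 2 + (∑ i ∈ sᶜ, f i) ^ 2 / #sᶜ ≤ ∑ i, f i ^ 2 := by
  rw [← sum_add_sum_compl s (fun i => f i ^ 2)]
  gcongr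
  exact div_le_of_le_mul₀ (by positivity) (by positivity)
    (mul_comm (#sᶜ : ℝ) _ ▸ sq_sum_le_card_mul_sum_sq ..)

lemma sum_sq_split_identity (N S a b : ℝ) (h2 : N ≠ 2) (h4 : N ≠ 4) :
    S ^ 2 / (N - 2) + (1 / 2) * (a - b) ^ 2
      + (2 * (N - 2) / (N - 4)) * (S / (N - 2) - (a + b) / 2) ^ 2
      = a ^ 2 + b ^ 2 + (S - a - b) ^ 2 / (N - 4) := by
  have h2' : N - 2 ≠ 0 := sub_ne_zero.mpr h2
  have h4' : N - 4 ≠ 0 := sub_ne_zero.mpr h4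
  field_simp
  ring

lemma sum_extremes_sq_add_sq_sum_middle_div_le {n : ℕ} (hn : 4 ≤ n) (f : Fin n → ℝ) :
    f ⟨0, by omega⟩ ^ 2 + f ⟨1, by omega⟩ ^ 2 + f ⟨n - 2, by omega⟩ ^ 2 + f ⟨n - 1, by omega⟩ ^ 2
      + (∑ i, f i - f ⟨0, by omega⟩ - f ⟨1, by omega⟩ - f ⟨n - 2, by omega⟩
          - f ⟨n - 1, by omega⟩) ^ 2 / ((n : ℝ) - 4)
      ≤ ∑ i, f i ^ 2 := by
  set s : Finset (Fin n) := {⟨0, by omega⟩, ⟨1, by omega⟩, ⟨n - 2, by omega⟩, ⟨n - 1, by omega⟩}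
  have hs : ∀ g : Fin n → ℝ, ∑ i ∈ s, g i
      = g ⟨0, by omega⟩ + g ⟨1, by omega⟩ + g ⟨n - 2, by omega⟩ + g ⟨n - 1, by omega⟩ := by
    intro g
    rw [sum_insert (by simp [Fin.ext_iff]; omega), sum_insert (by simp [Fin.ext_iff]; omega),
      sum_pair (by simp [Fin.ext_iff]; omega)]
    ring
  have hcard : (#sᶜ : ℝ) = n - 4 := by
    have : (#s : ℝ) = 4 := by
      have h := hs (fun _ => 1)
      simp only [sum_const, nsmul_eq_mul, mul_one] at h
      linarith
    rw [card_compl, Fintype.card_fin, Nat.cast_sub (by simpa using card_le_univ s), this]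
  have hcompl : ∑ i ∈ sᶜ, f i = ∑ i, f i - ∑ i ∈ s, f i := by
    rw [← sum_add_sum_compl s f]; ring
  have := sum_sq_add_sq_sum_compl_div_card_le s f
  rw [hcard, hcompl, hs, hs] at this
  convert this using 3
  ring

theorem stmt12 (n : ℕ) (hn : 5 ≤ n) {V : Type*} [Fintype V] [DecidableEq V]
    (G : SimpleGraph V) [DecidableRel G.Adj]
    (m : ℕ) (hm : m = G.edgeFinset.card)
    (e : Fin n ≃ V) (d : Fin n → ℕ) (hd : ∀ i, d i = G.degree (e i)) :
    ∑ v : V, (G.degree v : ℝ) ^ 2 ≥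
      (d ⟨0, by omega⟩ : ℝ) ^ 2 + (d ⟨n - 1, by omega⟩ : ℝ) ^ 2
      + (2 * (m : ℝ) - (d ⟨0, by omega⟩ : ℝ) - (d ⟨n - 1, by omega⟩ : ℝ)) ^ 2
          / ((n : ℝ) - 2)
      + (1 / 2) * ((d ⟨1, by omega⟩ : ℝ) - (d ⟨n - 2, by omega⟩ : ℝ)) ^ 2
      + (2 * ((n : ℝ) - 2) / ((n : ℝ) - 4)) *
          ((2 * (m : ℝ) - (d ⟨0, by omega⟩ : ℝ) - (d ⟨n - 1, by omega⟩ : ℝ))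
              / ((n : ℝ) - 2)
            - ((d ⟨1, by omega⟩ : ℝ) + (d ⟨n - 2, by omega⟩ : ℝ)) / 2) ^ 2 := by
  have hM : ∑ v : V, (G.degree v : ℝ) ^ 2 = ∑ i, (d i : ℝ) ^ 2 := by
    simp only [← e.sum_comp, hd]
  have hsum : ∑ i, (d i : ℝ) = 2 * m := by
    simp only [hd, hm]
    exact_mod_cast (e.sum_comp (fun v => G.degree v)).trans G.sum_degrees_eq_twice_card_edges
  have hn' : (5 : ℝ) ≤ n := by exact_mod_cast hn
  have hbound := sum_extremes_sq_add_sq_sum_middle_div_le (by omega) (fun i => (d i : ℝ))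
  have hid := sum_sq_split_identity n (2 * m - d ⟨0, by omega⟩ - d ⟨n - 1, by omega⟩)
    (d ⟨1, by omega⟩) (d ⟨n - 2, by omega⟩) (by linarith) (by linarith)
  rw [hsum] at hbound
  rw [ge_iff_le, hM]
  linear_combination hbound + hid
end

section
/- Let G be a simple graph with n ≥ 3 vertices, m edges, all degrees positive, and α real. Then Z_{2α+1}(G) + Z̄_{2α+1}(G) ≥ (n−1)·[ (Z_α(G))²/n + (1/2)(d_j^α − d_k^α)² + (2n/(n−2))·(Z_α(G)/n − (d_j^α + d_k^α)/2)² ] for any distinct vertices v_j, v_k. -/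
/-!
By the identity `Z_β + Z̄_β = (n - 1) Z_{β-1}` with `β = 2α + 1`, the left-hand side is
`(n - 1) ∑ x_v ^ 2` for `x_v = d_v ^ α`. Writing `T` for the sum of the `n - 2` values `x_v` with
`v ≠ j, k`, the bracket on the right is exactly `x_j ^ 2 + x_k ^ 2 + T ^ 2 / (n - 2)`, and
Cauchy–Schwarz bounds `T ^ 2 / (n - 2)` by the sum of the remaining squares.
-/

open Finset

lemma add_sq_div_add_half_sq_sub_add_sq_mean_sub (n a b T : ℝ) (hn : n ≠ 0) (hn2 : n - 2 ≠ 0) :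
    (a + b + T) ^ 2 / n + (1 / 2) * (a - b) ^ 2
      + (2 * n / (n - 2)) * ((a + b + T) / n - (a + b) / 2) ^ 2
      = a ^ 2 + b ^ 2 + T ^ 2 / (n - 2) := by
  field_simp
  ring

lemma sq_sum_div_card_add_pair_deviation_le_sum_sq {ι : Type*} [Fintype ι] [DecidableEq ι]
    (hcard : 3 ≤ Fintype.card ι) (x : ι → ℝ) {j k : ι} (hjk : j ≠ k) :
    (∑ i, x i) ^ 2 / Fintype.card ι + (1 / 2) * (x j - x k) ^ 2
      + (2 * Fintype.card ι / (Fintype.card ι - 2)) *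
          ((∑ i, x i) / Fintype.card ι - (x j + x k) / 2) ^ 2
      ≤ ∑ i, x i ^ 2 := by
  set s : Finset ι := univ \ {j, k}
  have hsplit (f : ι → ℝ) : ∑ i, f i = f j + f k + ∑ i ∈ s, f i := by
    rw [← sum_sdiff (subset_univ {j, k}), sum_pair hjk]
    ring
  have hs : (#s : ℝ) = Fintype.card ι - 2 := by
    rw [card_sdiff_of_subset (subset_univ _), card_pair hjk, card_univ,
      Nat.cast_sub (by omega)]
    norm_num
  have hn2 : (0 : ℝ) < Fintype.card ι - 2 := by
    have : (3 : ℝ) ≤ Fintype.card ι := by exact_mod_cast hcard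
    linarith
  rw [hsplit x, hsplit (x · ^ 2), add_sq_div_add_half_sq_sub_add_sq_mean_sub _ _ _ _
    (by positivity) hn2.ne']
  gcongr
  rw [div_le_iff₀' hn2, ← hs]
  exact sq_sum_le_card_mul_sum_sq

namespace SimpleGraph

variable {V : Type*} [Fintype V] (G : SimpleGraph V) [DecidableRel G.Adj]

lemma filter_ne_and_not_adj_eq_neighborFinset_compl [DecidableEq V] (u : V) :
    univ.filter (fun v => v ≠ u ∧ ¬ G.Adj u v) = Gᶜ.neighborFinset u := by
  ext v
  simp [compl_adj, ne_comm]

lemma sum_sum_neighborFinset_add {M : Type*} [AddCommMonoid M] (f : V → M) :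
    ∑ u, ∑ v ∈ G.neighborFinset u, (f u + f v) = 2 • ∑ u, G.degree u • f u := by
  have hswap : ∑ u, ∑ v ∈ G.neighborFinset u, f v = ∑ u, ∑ v ∈ G.neighborFinset u, f u :=
    sum_comm' fun u v => by simp [G.adj_comm]
  simp only [sum_add_distrib, hswap, sum_const, card_neighborFinset_eq_degree, two_nsmul]

lemma sum_degree_mul_add_half_sum_compl [DecidableEq V] (f : V → ℝ) :
    ∑ v, (G.degree v : ℝ) * f v + (1 / 2) * ∑ u, ∑ v ∈ Gᶜ.neighborFinset u, (f u + f v)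
      = (Fintype.card V - 1) * ∑ v, f v := by
  have hdeg (v : V) : (Gᶜ.degree v : ℝ) = Fintype.card V - 1 - G.degree v := by
    have := G.degree_lt_card_verts v
    rw [degree_compl, Nat.cast_sub (by omega), Nat.cast_sub (by omega), Nat.cast_one]
  simp only [sum_sum_neighborFinset_add, nsmul_eq_mul, hdeg, mul_sum, ← sum_add_distrib]
  refine sum_congr rfl fun v _ => ?_
  push_cast
  ring

lemma zagreb_add_coindex [DecidableEq V] (hdeg : ∀ v, 0 < G.degree v) (β : ℝ) :
    ∑ v, (G.degree v : ℝ) ^ β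
      + (1 / 2) * ∑ u, ∑ v ∈ univ.filter (fun v => v ≠ u ∧ ¬ G.Adj u v),
          ((G.degree u : ℝ) ^ (β - 1) + (G.degree v : ℝ) ^ (β - 1))
      = (Fintype.card V - 1) * ∑ v, (G.degree v : ℝ) ^ (β - 1) := by
  have hpow (v : V) : (G.degree v : ℝ) ^ β = G.degree v * (G.degree v : ℝ) ^ (β - 1) := by
    have : (G.degree v : ℝ) ≠ 0 := by exact_mod_cast (hdeg v).ne'
    rw [mul_comm, ← Real.rpow_add_one this, sub_add_cancel]
  simp only [hpow, filter_ne_and_not_adj_eq_neighborFinset_compl]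
  exact G.sum_degree_mul_add_half_sum_compl _

end SimpleGraph

theorem stmt14 {V : Type*} [Fintype V] [DecidableEq V] (G : SimpleGraph V)
    [DecidableRel G.Adj] (hn : 3 ≤ Fintype.card V)
    (hdeg : ∀ v : V, 0 < G.degree v) (α : ℝ) (j k : V) (hjk : j ≠ k) :
    (∑ v : V, (G.degree v : ℝ) ^ (2 * α + 1))
      + (1 / 2) * ∑ u : V, ∑ v ∈ Finset.univ.filter (fun v => v ≠ u ∧ ¬ G.Adj u v),
          ((G.degree u : ℝ) ^ (2 * α + 1 - 1) + (G.degree v : ℝ) ^ (2 * α + 1 - 1))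
      ≥ ((Fintype.card V : ℝ) - 1) *
          ((∑ v : V, (G.degree v : ℝ) ^ α) ^ 2 / (Fintype.card V : ℝ)
            + (1 / 2) * ((G.degree j : ℝ) ^ α - (G.degree k : ℝ) ^ α) ^ 2
            + (2 * (Fintype.card V : ℝ) / ((Fintype.card V : ℝ) - 2)) *
                ((∑ v : V, (G.degree v : ℝ) ^ α) / (Fintype.card V : ℝ)
                  - ((G.degree j : ℝ) ^ α + (G.degree k : ℝ) ^ α) / 2) ^ 2) := by
  have hsq (v : V) : (G.degree v : ℝ) ^ (2 * α + 1 - 1) = ((G.degree v : ℝ) ^ α) ^ 2 := by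
    rw [add_sub_cancel_right, mul_comm, Real.rpow_mul (Nat.cast_nonneg _), Real.rpow_two]
  rw [G.zagreb_add_coindex hdeg, ge_iff_le]
  simp only [hsq]
  have hn1 : (0 : ℝ) ≤ Fintype.card V - 1 :=
    sub_nonneg.mpr (Nat.one_le_cast.mpr (by omega))
  exact mul_le_mul_of_nonneg_left
    (sq_sum_div_card_add_pair_deviation_le_sum_sq hn (fun v => (G.degree v : ℝ) ^ α) hjk) hn1
end

section
/- Let G be a simple graph with n ≥ 3 vertices, all degrees positive, maximum degree Δ and minimum degree δ. Then the modified first Zagreb index satisfies ᵐM_1(G) ≥ ID(G)²/n + (1/2)(1/Δ − 1/δ)² + (2n/(n−2))·(ID(G)/n − (1/Δ + 1/δ)/2)², where ID(G) = ∑_i 1/d_i and ᵐM_1(G) = ∑_i 1/d_i². -/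
open Finset

theorem stmt15 {V : Type*} [Fintype V] [DecidableEq V] (G : SimpleGraph V)
    [DecidableRel G.Adj] (hn : 3 ≤ Fintype.card V)
    (hdeg : ∀ v : V, 0 < G.degree v) (Δ δ : ℕ)
    (hΔ₁ : ∀ v : V, G.degree v ≤ Δ) (hΔ₂ : ∃ v : V, G.degree v = Δ)
    (hδ₁ : ∀ v : V, δ ≤ G.degree v) (hδ₂ : ∃ v : V, G.degree v = δ) :
    ∑ v : V, 1 / (G.degree v : ℝ) ^ 2 ≥
      (∑ v : V, 1 / (G.degree v : ℝ)) ^ 2 / (Fintype.card V : ℝ)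
      + (1 / 2) * (1 / (Δ : ℝ) - 1 / (δ : ℝ)) ^ 2
      + (2 * (Fintype.card V : ℝ) / ((Fintype.card V : ℝ) - 2)) *
          ((∑ v : V, 1 / (G.degree v : ℝ)) / (Fintype.card V : ℝ)
            - (1 / (Δ : ℝ) + 1 / (δ : ℝ)) / 2) ^ 2 := by
  obtain ⟨u, hu⟩ := hΔ₂
  obtain ⟨w, hw⟩ := hδ₂
  have hδ0 : 0 < δ := hw ▸ hdeg w
  have hΔ0 : 0 < Δ := hu ▸ hdeg u
  have hN3 : (3:ℝ) ≤ (Fintype.card V : ℝ) := by exact_mod_cast hn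
  set N : ℝ := (Fintype.card V : ℝ) with hN
  have hN0 : (0:ℝ) < N := by linarith
  have hN2 : (0:ℝ) < N - 2 := by linarith
  set x : V → ℝ := fun v => 1 / (G.degree v : ℝ) with hxdef
  have hsq : ∀ v : V, 1 / (G.degree v : ℝ) ^ 2 = (x v) ^ 2 := by
    intro v; simp [hxdef, div_pow]
  simp_rw [hsq]
  set m : ℝ := (∑ v : V, x v) / N with hm
  have hδR : (0:ℝ) < (δ:ℝ) := by exact_mod_cast hδ0
  have hΔR : (0:ℝ) < (Δ:ℝ) := by exact_mod_cast hΔ0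
  have hxu : x u = 1 / (Δ:ℝ) := by simp [hxdef, hu]
  have hxw : x w = 1 / (δ:ℝ) := by simp [hxdef, hw]
  -- variance identity
  have hvar : ∑ v : V, (x v - m) ^ 2 = ∑ v : V, (x v) ^ 2 - (∑ v : V, x v) ^ 2 / N := by
    have h1 : ∀ v : V, (x v - m) ^ 2 = (x v) ^ 2 - 2 * m * x v + m ^ 2 := fun v => by ring
    simp_rw [h1, Finset.sum_add_distrib, Finset.sum_sub_distrib, ← Finset.mul_sum,
      Finset.sum_const, Finset.card_univ, nsmul_eq_mul, ← hN, hm]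
    field_simp
    ring
  by_cases hcase : Δ = δ
  · -- all degrees equal δ
    have hall : ∀ v : V, x v = 1 / (δ:ℝ) := by
      intro v
      have h1 : G.degree v = δ := le_antisymm (hcase ▸ hΔ₁ v) (hδ₁ v)
      simp [hxdef, h1]
    have hm' : m = 1 / (δ:ℝ) := by
      rw [hm]
      simp_rw [hall, Finset.sum_const, Finset.card_univ, nsmul_eq_mul, ← hN]
      field_simp
    simp_rw [hall, Finset.sum_const, Finset.card_univ, nsmul_eq_mul, ← hN, hcase, hm']
    have : N * (1 / (δ:ℝ)) ^ 2 = (N * (1 / (δ:ℝ))) ^ 2 / N + 1/2 * (1/(δ:ℝ) - 1/(δ:ℝ))^2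
        + 2 * N / (N - 2) * (1/(δ:ℝ) - (1/(δ:ℝ) + 1/(δ:ℝ))/2) ^ 2 := by
      field_simp
      ring
    linarith [this.ge]
  · have huw : u ≠ w := by
      intro h; exact hcase (by rw [← hu, h, hw])
    have hmem : ({u, w} : Finset V) ⊆ Finset.univ := Finset.subset_univ _
    have hsplit : ∑ v ∈ (Finset.univ \ {u, w}), (x v - m) ^ 2 + ∑ v ∈ ({u, w} : Finset V), (x v - m) ^ 2
        = ∑ v : V, (x v - m) ^ 2 := Finset.sum_sdiff hmem
    have hpair : ∑ v ∈ ({u, w} : Finset V), (x v - m) ^ 2 = (x u - m) ^ 2 + (x w - m) ^ 2 :=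
      Finset.sum_pair huw
    have hpair' : ∑ v ∈ ({u, w} : Finset V), (x v - m) = (x u - m) + (x w - m) :=
      Finset.sum_pair huw
    have hsplit' : ∑ v ∈ (Finset.univ \ {u, w}), (x v - m) + ∑ v ∈ ({u, w} : Finset V), (x v - m)
        = ∑ v : V, (x v - m) := Finset.sum_sdiff hmem
    have htot : ∑ v : V, (x v - m) = 0 := by
      simp_rw [Finset.sum_sub_distrib, Finset.sum_const, Finset.card_univ, nsmul_eq_mul, ← hN, hm]
      field_simp
      ring
    have hcard : (#(Finset.univ \ ({u, w} : Finset V)) : ℝ) = N - 2 := by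
      rw [Finset.card_sdiff_of_subset hmem, Finset.card_univ]
      have : ({u, w} : Finset V).card = 2 := Finset.card_pair huw
      rw [this]
      have : 2 ≤ Fintype.card V := by omega
      push_cast [Nat.cast_sub this]
      ring
    have hCS : (∑ v ∈ (Finset.univ \ {u, w}), (x v - m)) ^ 2
        ≤ (N - 2) * ∑ v ∈ (Finset.univ \ {u, w}), (x v - m) ^ 2 := by
      have := sq_sum_le_card_mul_sum_sq (s := Finset.univ \ ({u, w} : Finset V))
        (f := fun v => x v - m)
      calc (∑ v ∈ (Finset.univ \ {u, w}), (x v - m)) ^ 2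
          ≤ (#(Finset.univ \ ({u, w} : Finset V)) : ℝ) * ∑ v ∈ (Finset.univ \ {u, w}), (x v - m) ^ 2 := by
            exact_mod_cast this
        _ = (N - 2) * ∑ v ∈ (Finset.univ \ {u, w}), (x v - m) ^ 2 := by rw [hcard]
    -- the complement sum value
    have hcompl : ∑ v ∈ (Finset.univ \ {u, w}), (x v - m) = -(x u - m) - (x w - m) := by
      have := hsplit'
      rw [htot, hpair'] at this
      linarith
    rw [hcompl] at hCS
    -- put together
    have hE : ∑ v : V, (x v) ^ 2 - (∑ v : V, x v) ^ 2 / N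
        = ∑ v ∈ (Finset.univ \ {u, w}), (x v - m) ^ 2 + ((x u - m) ^ 2 + (x w - m) ^ 2) := by
      rw [← hvar, ← hsplit, hpair]
    rw [ge_iff_le]
    have key : (1/2) * (1/(Δ:ℝ) - 1/(δ:ℝ))^2 + (2 * N / (N - 2)) * (m - (1/(Δ:ℝ) + 1/(δ:ℝ))/2)^2
        ≤ ∑ v : V, (x v) ^ 2 - (∑ v : V, x v) ^ 2 / N := by
      rw [hE, hxu] at *
      rw [hxw] at *
      set a := 1/(Δ:ℝ)
      set b := 1/(δ:ℝ)
      set R := ∑ v ∈ (Finset.univ \ {u, w}), (x v - m) ^ 2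
      have hRle : (-(a - m) - (b - m))^2 / (N-2) ≤ R := by
        rw [div_le_iff₀ hN2]
        linarith [hCS]
      have hid : (1/2) * (a - b)^2 + (2 * N / (N - 2)) * (m - (a + b)/2)^2
          = (-(a - m) - (b - m))^2 / (N-2) + ((a - m)^2 + (b - m)^2) := by
        field_simp
        ring
      rw [hid]
      linarith
    linarith
end

section
/- Let G be a simple graph with n ≥ 2 vertices, m edges, all degrees positive, and maximum degree Δ. Then ID(G) − 1/Δ ≥ (n−1)²/(2m − Δ). -/
open Finset

theorem stmt17 {V : Type*} [Fintype V] [DecidableEq V] (G : SimpleGraph V)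
    [DecidableRel G.Adj] (hn : 2 ≤ Fintype.card V)
    (hdeg : ∀ v : V, 0 < G.degree v) (m : ℕ) (hm : m = G.edgeFinset.card)
    (Δ : ℕ) (hΔ₁ : ∀ v : V, G.degree v ≤ Δ) (hΔ₂ : ∃ v : V, G.degree v = Δ) :
    (∑ v : V, 1 / (G.degree v : ℝ)) - 1 / (Δ : ℝ) ≥
      ((Fintype.card V : ℝ) - 1) ^ 2 / (2 * (m : ℝ) - (Δ : ℝ)) := by
  obtain ⟨v₀, hv₀⟩ := hΔ₂
  set s : Finset V := Finset.univ.erase v₀ with hs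
  have hdeg2m : ∑ v : V, G.degree v = 2 * m := by
    rw [hm]; exact G.sum_degrees_eq_twice_card_edges
  have hsplit : ∑ v : V, (G.degree v : ℝ) = (Δ : ℝ) + ∑ v ∈ s, (G.degree v : ℝ) := by
    rw [hs, ← Finset.add_sum_erase _ _ (Finset.mem_univ v₀), hv₀]
  have hsum : ∑ v ∈ s, (G.degree v : ℝ) = 2 * (m : ℝ) - (Δ : ℝ) := by
    have : ∑ v : V, (G.degree v : ℝ) = 2 * (m : ℝ) := by
      rw [← Nat.cast_sum, hdeg2m]; push_cast; ring
    linarith [hsplit, this]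
  have hcard : (s.card : ℝ) = (Fintype.card V : ℝ) - 1 := by
    rw [hs, Finset.card_erase_of_mem (Finset.mem_univ v₀), Finset.card_univ]
    have : 1 ≤ Fintype.card V := by omega
    push_cast [Nat.cast_sub this]
    ring
  have hL : (∑ v : V, 1 / (G.degree v : ℝ)) - 1 / (Δ : ℝ) = ∑ v ∈ s, 1 / (G.degree v : ℝ) := by
    rw [hs, ← Finset.add_sum_erase _ _ (Finset.mem_univ v₀), hv₀]
    ring
  rw [hL, ge_iff_le, ← hsum, ← hcard]
  have key := Finset.sq_sum_div_le_sum_sq_div s (fun _ => (1 : ℝ))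
      (g := fun v => (G.degree v : ℝ))
      (fun v _ => by simpa using (Nat.cast_pos (α := ℝ)).mpr (hdeg v))
  simpa using key
end

section
/- Let G be a simple graph with n ≥ 3 vertices, m edges, all degrees positive, maximum degree Δ and minimum degree δ (attained at two distinct vertices). Then ID(G) − 1/Δ − 1/δ ≥ (n−2)²/(2m − Δ − δ). -/
/-! Removing the two extreme vertices leaves `n - 2` vertices whose degrees sum to
`2m - Δ - δ`, and the Cauchy–Schwarz inequality in Engel form, `(∑ 1)² / ∑ dᵢ ≤ ∑ 1 / dᵢ`,
applied to these vertices gives the bound. -/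

open Finset

theorem Finset.sq_card_div_sum_le_sum_one_div {ι R : Type*} [Semifield R] [LinearOrder R]
    [IsStrictOrderedRing R] [ExistsAddOfLE R] (s : Finset ι) {f : ι → R} (hf : ∀ i ∈ s, 0 < f i) :
    (#s : R) ^ 2 / ∑ i ∈ s, f i ≤ ∑ i ∈ s, 1 / f i := by
  simpa using sq_sum_div_le_sum_sq_div s (fun _ => (1 : R)) hf

theorem Finset.sum_sdiff_pair {ι M : Type*} [Fintype ι] [DecidableEq ι] [AddCommGroup M]
    {u v : ι} (huv : u ≠ v) (f : ι → M) :
    ∑ w ∈ univ \ {u, v}, f w = ∑ w, f w - f u - f v := by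
  rw [← sum_sdiff (subset_univ {u, v}) (f := f), sum_pair huv]
  abel

theorem Finset.cast_card_sdiff_pair {ι R : Type*} [Fintype ι] [DecidableEq ι] [AddGroupWithOne R]
    {u v : ι} (huv : u ≠ v) : (#(univ \ {u, v}) : R) = Fintype.card ι - 2 := by
  rw [card_sdiff_of_subset (subset_univ _), card_pair huv, card_univ,
    Nat.cast_sub (by simpa [card_pair huv] using card_le_univ {u, v})]
  norm_num

theorem stmt18_general {V : Type*} [Fintype V] [DecidableEq V] (G : SimpleGraph V)
    [DecidableRel G.Adj]
    (hdeg : ∀ v : V, 0 < G.degree v) (m : ℕ) (hm : m = G.edgeFinset.card)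
    (Δ δ : ℕ)
    (hattain : ∃ u v : V, u ≠ v ∧ G.degree u = Δ ∧ G.degree v = δ) :
    (∑ v : V, 1 / (G.degree v : ℝ)) - 1 / (Δ : ℝ) - 1 / (δ : ℝ) ≥
      ((Fintype.card V : ℝ) - 2) ^ 2 / (2 * (m : ℝ) - (Δ : ℝ) - (δ : ℝ)) := by
  obtain ⟨u, v, huv, rfl, rfl⟩ := hattain
  have hdegree_sum : ∑ w, (G.degree w : ℝ) = 2 * m := by
    rw [hm, ← Nat.cast_sum, G.sum_degrees_eq_twice_card_edges]
    push_cast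
    ring
  rw [ge_iff_le, ← hdegree_sum, ← sum_sdiff_pair huv, ← sum_sdiff_pair huv,
    ← cast_card_sdiff_pair huv]
  exact sq_card_div_sum_le_sum_one_div _ fun w _ => by exact_mod_cast hdeg w

theorem stmt18 {V : Type*} [Fintype V] [DecidableEq V] (G : SimpleGraph V)
    [DecidableRel G.Adj] (hn : 3 ≤ Fintype.card V)
    (hdeg : ∀ v : V, 0 < G.degree v) (m : ℕ) (hm : m = G.edgeFinset.card)
    (Δ δ : ℕ) (hΔ₁ : ∀ v : V, G.degree v ≤ Δ) (hδ₁ : ∀ v : V, δ ≤ G.degree v)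
    (hattain : ∃ u v : V, u ≠ v ∧ G.degree u = Δ ∧ G.degree v = δ) :
    (∑ v : V, 1 / (G.degree v : ℝ)) - 1 / (Δ : ℝ) - 1 / (δ : ℝ) ≥
      ((Fintype.card V : ℝ) - 2) ^ 2 / (2 * (m : ℝ) - (Δ : ℝ) - (δ : ℝ)) :=
  stmt18_general G hdeg m hm Δ δ hattain
end

section
/- Let G be a simple graph with n ≥ 3 vertices, m edges, maximum degree Δ and minimum degree δ. Then the first Zagreb coindex satisfies M̄_1(G) ≤ (2m/n)(n(n−1) − 2m) − (1/2)(Δ − δ)² − (2n/(n−2))·(2m/n − (Δ + δ)/2)², where M̄_1(G) = ∑_{i ≁ j, i ≠ j}(d_i + d_j). -/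
open Finset

private lemma coindex_sum_eq {V : Type*} [Fintype V] [DecidableEq V] (G : SimpleGraph V)
    [DecidableRel G.Adj] :
    ∑ u : V, ∑ v ∈ Finset.univ.filter (fun v => v ≠ u ∧ ¬ G.Adj u v),
        ((G.degree u : ℝ) + (G.degree v : ℝ))
    = 2 * (2 * G.edgeFinset.card) * ((Fintype.card V : ℝ) - 1)
      - 2 * ∑ v : V, (G.degree v : ℝ)^2 := by
  have hsub : ∀ u : V, G.neighborFinset u ⊆ univ.erase u := by
    intro u v hv
    simp only [mem_erase, mem_univ, and_true]
    exact (G.mem_neighborFinset u v |>.1 hv).ne'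
  have hset : ∀ u : V, univ.filter (fun v => v ≠ u ∧ ¬ G.Adj u v)
      = (univ.erase u) \ G.neighborFinset u := by
    intro u; ext v; simp [and_comm]
  have hdeg : ∀ v : V, ((G.neighborFinset v).card : ℝ) = (G.degree v : ℝ) := by
    intro v; rw [G.card_neighborFinset_eq_degree]
  have hA : ∑ u : V, ∑ v ∈ G.neighborFinset u, (G.degree v : ℝ)
      = ∑ v : V, (G.degree v : ℝ)^2 := by
    have h1 : ∀ u : V, ∑ v ∈ G.neighborFinset u, (G.degree v : ℝ)
        = ∑ v : V, if G.Adj u v then (G.degree v : ℝ) else 0 := by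
      intro u
      have hnu : G.neighborFinset u = univ.filter (fun v => G.Adj u v) := by
        ext v; simp [SimpleGraph.mem_neighborFinset]
      rw [hnu, Finset.sum_filter]
    simp_rw [h1]
    rw [Finset.sum_comm]
    refine Finset.sum_congr rfl fun v _ => ?_
    rw [← Finset.sum_filter]
    have : univ.filter (fun u => G.Adj u v) = G.neighborFinset v := by
      ext u; simp [SimpleGraph.mem_neighborFinset, G.adj_comm]
    rw [this, Finset.sum_const, nsmul_eq_mul, hdeg, sq]
  have hS1 : ∑ v : V, (G.degree v : ℝ) = 2 * G.edgeFinset.card := by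
    exact_mod_cast congrArg (Nat.cast : ℕ → ℝ) G.sum_degrees_eq_twice_card_edges
  calc ∑ u : V, ∑ v ∈ Finset.univ.filter (fun v => v ≠ u ∧ ¬ G.Adj u v),
        ((G.degree u : ℝ) + (G.degree v : ℝ))
      = ∑ u : V, (((Fintype.card V : ℝ) - 1) * G.degree u
          + (∑ v : V, (G.degree v : ℝ)) - (G.degree u : ℝ)
          - (G.degree u : ℝ)^2 - ∑ v ∈ G.neighborFinset u, (G.degree v : ℝ)) := by
        refine Finset.sum_congr rfl fun u _ => ?_
        have h1le : 1 ≤ Fintype.card V := Fintype.card_pos_iff.2 ⟨u⟩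
        rw [hset u, Finset.sum_sdiff_eq_sub (hsub u), Finset.sum_add_distrib,
          Finset.sum_add_distrib, Finset.sum_const, Finset.sum_const,
          Finset.sum_erase_eq_sub (mem_univ u), nsmul_eq_mul, nsmul_eq_mul,
          Finset.card_erase_of_mem (mem_univ u), hdeg, Finset.card_univ,
          Nat.cast_sub h1le, sq]
        push_cast
        ring
    _ = 2 * (2 * G.edgeFinset.card) * ((Fintype.card V : ℝ) - 1)
      - 2 * ∑ v : V, (G.degree v : ℝ)^2 := by
        simp only [Finset.sum_sub_distrib, Finset.sum_add_distrib, ← Finset.mul_sum,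
          Finset.sum_const, nsmul_eq_mul, Finset.card_univ, hA]
        rw [hS1]
        ring

private lemma zagreb_lower {V : Type*} [Fintype V] [DecidableEq V] (G : SimpleGraph V)
    [DecidableRel G.Adj] (hn : 3 ≤ Fintype.card V)
    (m : ℕ) (hm : (2:ℝ) * m = ∑ v : V, (G.degree v : ℝ)) (Δ δ : ℕ)
    (hΔ₁ : ∀ v : V, G.degree v ≤ Δ) (hΔ₂ : ∃ v : V, G.degree v = Δ)
    (hδ₁ : ∀ v : V, δ ≤ G.degree v) (hδ₂ : ∃ v : V, G.degree v = δ) :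
    4 * (m:ℝ)^2 / (Fintype.card V : ℝ) + (1/2) * ((Δ:ℝ) - δ)^2
      + (2 * (Fintype.card V : ℝ) / ((Fintype.card V : ℝ) - 2)) *
          (2 * (m:ℝ) / (Fintype.card V : ℝ) - ((Δ:ℝ) + δ)/2)^2
      ≤ ∑ v : V, (G.degree v : ℝ)^2 := by
  set n : ℝ := (Fintype.card V : ℝ) with hn'
  have hn3 : (3:ℝ) ≤ n := by rw [hn']; exact_mod_cast hn
  have hn0 : n ≠ 0 := by linarith
  have hn2 : (0:ℝ) < n - 2 := by linarith
  set db : ℝ := 2 * m / n with hdb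
  have h2m : 2 * (m:ℝ) = n * db := by rw [hdb]; field_simp
  obtain ⟨u, hu⟩ := hΔ₂
  obtain ⟨w, hw⟩ := hδ₂
  rcases eq_or_lt_of_le (hδ₁ u) with heq | hlt
  · -- δ = Δ: all degrees equal
    rw [hu] at heq
    have hall : ∀ v : V, (G.degree v : ℝ) = δ := by
      intro v
      exact_mod_cast congrArg (Nat.cast : ℕ → ℝ)
        (Nat.le_antisymm (heq ▸ hΔ₁ v) (hδ₁ v))
    have hS2 : ∑ v : V, (G.degree v : ℝ)^2 = n * (δ:ℝ)^2 := by
      simp_rw [hall]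
      simp [Finset.card_univ, hn']
    have h2mδ : 2 * (m:ℝ) = n * δ := by
      rw [hm]
      simp_rw [hall]
      simp [Finset.card_univ, hn']
    have hdbδ : db = δ := by rw [hdb, h2mδ]; field_simp
    have hΔδ : (Δ:ℝ) = δ := by exact_mod_cast heq.symm
    have h4 : 4 * (m:ℝ)^2 / n = n * (δ:ℝ)^2 := by
      rw [show (4:ℝ)*(m:ℝ)^2 = (2*m)*(2*m) by ring, h2mδ]
      field_simp
    rw [hS2, hΔδ, hdbδ, h4]
    ring_nf
    simp
  · -- δ < Δ
    rw [hu] at hlt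
    have huw : u ≠ w := by
      intro h; rw [h, hw] at hu; omega
    set s : Finset V := (univ.erase u).erase w with hs
    have hwmem : w ∈ univ.erase u := by simp [Ne.symm huw]
    have hcards : (s.card : ℝ) = n - 2 := by
      rw [hs, Finset.card_erase_of_mem hwmem, Finset.card_erase_of_mem (mem_univ u),
        Finset.card_univ]
      rw [show Fintype.card V - 1 - 1 = Fintype.card V - 2 from by omega,
        Nat.cast_sub (by omega)]
      norm_num [hn']
    have hsum_univ : ∀ f : V → ℝ, ∑ v : V, f v = f u + f w + ∑ v ∈ s, f v := by
      intro f
      rw [hs, ← Finset.add_sum_erase _ f (mem_univ u), ← Finset.add_sum_erase _ f hwmem]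
      ring
    set g : V → ℝ := fun v => (G.degree v : ℝ) - db with hg
    have hsum_g : ∑ v ∈ s, g v = 2 * db - Δ - δ := by
      have h1 : ∑ v : V, g v = g u + g w + ∑ v ∈ s, g v := hsum_univ g
      have h2 : ∑ v : V, g v = 2 * m - n * db := by
        simp only [hg, Finset.sum_sub_distrib, Finset.sum_const, nsmul_eq_mul,
          Finset.card_univ, ← hm, hn']
      rw [h2m] at h2
      have : g u = Δ - db := by simp [hg, hu]
      rw [this] at h1
      have : g w = δ - db := by simp [hg, hw]
      rw [this] at h1
      linarith
    have cauchy : (∑ v ∈ s, g v)^2 ≤ (s.card : ℝ) * ∑ v ∈ s, (g v)^2 := by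
      exact sq_sum_le_card_mul_sum_sq
    rw [hsum_g, hcards] at cauchy
    have hexp : ∑ v : V, (g v)^2 = (∑ v : V, (G.degree v : ℝ)^2) - 4 * m^2 / n := by
      have e1 : ∀ v : V, (g v)^2 = (G.degree v:ℝ)^2 - 2*db*(G.degree v) + db^2 := by
        intro v; simp only [hg]; ring
      simp_rw [e1]
      rw [Finset.sum_add_distrib, Finset.sum_sub_distrib, ← Finset.mul_sum, ← hm,
        Finset.sum_const, nsmul_eq_mul, Finset.card_univ, ← hn', hdb]
      field_simp
      ring
    have hsplit : ∑ v : V, (g v)^2 = (Δ - db)^2 + (δ - db)^2 + ∑ v ∈ s, (g v)^2 := by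
      rw [hsum_univ (fun v => (g v)^2)]
      simp [hg, hu, hw]
    have hdivle : (2 * db - Δ - δ)^2 / (n - 2) ≤ ∑ v ∈ s, (g v)^2 := by
      rw [div_le_iff₀ hn2]
      linarith [cauchy]
    have hident : (1/2) * ((Δ:ℝ) - δ)^2 + (2 * n / (n - 2)) * (db - ((Δ:ℝ) + δ)/2)^2
        = (Δ - db)^2 + (δ - db)^2 + (2 * db - Δ - δ)^2 / (n - 2) := by
      field_simp
      ring
    linarith [hident, hdivle, hexp, hsplit]

theorem stmt19 {V : Type*} [Fintype V] [DecidableEq V] (G : SimpleGraph V)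
    [DecidableRel G.Adj] (hn : 3 ≤ Fintype.card V)
    (m : ℕ) (hm : m = G.edgeFinset.card) (Δ δ : ℕ)
    (hΔ₁ : ∀ v : V, G.degree v ≤ Δ) (hΔ₂ : ∃ v : V, G.degree v = Δ)
    (hδ₁ : ∀ v : V, δ ≤ G.degree v) (hδ₂ : ∃ v : V, G.degree v = δ) :
    (1 / 2) * ∑ u : V, ∑ v ∈ Finset.univ.filter (fun v => v ≠ u ∧ ¬ G.Adj u v),
        ((G.degree u : ℝ) + (G.degree v : ℝ)) ≤
      (2 * (m : ℝ) / (Fintype.card V : ℝ)) *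
          ((Fintype.card V : ℝ) * ((Fintype.card V : ℝ) - 1) - 2 * (m : ℝ))
      - (1 / 2) * ((Δ : ℝ) - (δ : ℝ)) ^ 2
      - (2 * (Fintype.card V : ℝ) / ((Fintype.card V : ℝ) - 2)) *
          (2 * (m : ℝ) / (Fintype.card V : ℝ) - ((Δ : ℝ) + (δ : ℝ)) / 2) ^ 2 := by
  have hn3 : (3:ℝ) ≤ (Fintype.card V : ℝ) := by exact_mod_cast hn
  have hn0 : (Fintype.card V : ℝ) ≠ 0 := by linarith
  have hmcast : (G.edgeFinset.card : ℝ) = (m : ℝ) := by rw [hm]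
  have hm' : (2:ℝ) * m = ∑ v : V, (G.degree v : ℝ) := by
    rw [← hmcast]
    exact_mod_cast (congrArg (Nat.cast : ℕ → ℝ) G.sum_degrees_eq_twice_card_edges).symm
  have hK := zagreb_lower G hn m hm' Δ δ hΔ₁ hΔ₂ hδ₁ hδ₂
  have hA := coindex_sum_eq G
  rw [hmcast] at hA
  have hiden : (2 * (m:ℝ) / (Fintype.card V : ℝ)) *
      ((Fintype.card V : ℝ) * ((Fintype.card V : ℝ) - 1) - 2 * m)
      = 2 * m * ((Fintype.card V : ℝ) - 1) - 4 * m^2 / (Fintype.card V : ℝ) := by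
    field_simp
    ring
  rw [hA, hiden]
  linarith [hK]
end
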